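/- arXiv:2602.21752 — 6 statements merged into one kernel-verified Lean document; each statement's English description precedes it below -/
import Mathlib

section
/- Let N, m be positive integers, let α be a real number with 0 ≤ α < 1, and let σ_v ≥ 0. For each k ∈ ℕ let C_k be an m×N complex matrix and R_k an m×m complex positive definite matrix. Define the covariance recursion Σ_0 = I_N and Σ_{k+1} = α²·(Σ_k − Σ_k C_kᴴ (C_k Σ_k C_kᴴ + R_k)⁻¹ C_k Σ_k) + (1−α²)·σ_v²·I_N. Then every Σ_k is positive semidefinite, and the time-averaged trace satisfies limsup_{K→∞} (1/K) ∑_{k=0}^{K−1} Re(Tr(Σ_k)) ≤ N·σ_v²/(1−α²). (This is the deterministic covariance-recursion form of Theorem 1: stability of the pilot-free Kalman channel predictor.) -/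
open Matrix ComplexOrder Filter

private lemma psd_smul_of_nonneg {n : Type*} [Fintype n] {c : ℂ} (hc : 0 ≤ c)
    {A : Matrix n n ℂ} (hA : A.PosSemidef) : (c • A).PosSemidef := by
  have hcs : star c = c := by
    rw [Complex.star_def, Complex.conj_eq_iff_im]
    exact ((Complex.nonneg_iff.mp hc).2).symm
  refine Matrix.PosSemidef.of_dotProduct_mulVec_nonneg ?_ ?_
  · show (c • A)ᴴ = c • A
    rw [conjTranspose_smul, hcs, hA.isHermitian.eq]
  · intro x
    rw [smul_mulVec, dotProduct_smul, smul_eq_mul]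
    exact mul_nonneg hc (hA.dotProduct_mulVec_nonneg x)

private lemma psd_trace_nonneg {n : Type*} [Fintype n] [DecidableEq n]
    {A : Matrix n n ℂ} (hA : A.PosSemidef) : (0:ℂ) ≤ A.trace := by
  rw [Matrix.trace]
  apply Finset.sum_nonneg
  intro i _
  have := hA.dotProduct_mulVec_nonneg (Pi.single i 1)
  simpa [Matrix.mulVec_single, dotProduct, Pi.single_apply, Matrix.diag] using this

private lemma schur_step {N m : ℕ} (C : Matrix (Fin m) (Fin N) ℂ)
    {R : Matrix (Fin m) (Fin m) ℂ} (hR : R.PosDef)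
    {S : Matrix (Fin N) (Fin N) ℂ} (hS : S.PosSemidef) :
    (S - S * Cᴴ * (C * S * Cᴴ + R)⁻¹ * C * S).PosSemidef := by
  have hA : (C * S * Cᴴ + R).PosDef :=
    Matrix.PosDef.posSemidef_add (hS.mul_mul_conjTranspose_same C) hR
  haveI := hA.isUnit.invertible
  have h1 : (fromBlocks (C * S * Cᴴ) (C * S) (C * S)ᴴ S).PosSemidef := by
    have h := hS.conjTranspose_mul_mul_same
      (fromCols Cᴴ (1 : Matrix (Fin N) (Fin N) ℂ))
    rw [conjTranspose_fromCols_eq_fromRows_conjTranspose, conjTranspose_conjTranspose,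
      conjTranspose_one, fromRows_mul, fromRows_mul_fromCols] at h
    have e : (C * S)ᴴ = S * Cᴴ := by
      rw [conjTranspose_mul, hS.isHermitian.eq]
    simpa [e, Matrix.mul_one, Matrix.one_mul] using h
  have h2 : (fromBlocks R (0 : Matrix (Fin m) (Fin N) ℂ)
      (0 : Matrix (Fin N) (Fin m) ℂ) (0 : Matrix (Fin N) (Fin N) ℂ)).PosSemidef := by
    have h := hR.posSemidef.conjTranspose_mul_mul_same
      (fromCols (1 : Matrix (Fin m) (Fin m) ℂ) (0 : Matrix (Fin m) (Fin N) ℂ))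
    rw [conjTranspose_fromCols_eq_fromRows_conjTranspose, conjTranspose_one,
      conjTranspose_zero, fromRows_mul, fromRows_mul_fromCols] at h
    simpa using h
  have hsum : (fromBlocks (C * S * Cᴴ + R) (C * S) (C * S)ᴴ S).PosSemidef := by
    have := h1.add h2
    rw [fromBlocks_add] at this
    simpa using this
  have := (Matrix.PosDef.fromBlocks₁₁ (C * S) S hA).mp hsum
  have e2 : (C * S)ᴴ * (C * S * Cᴴ + R)⁻¹ * (C * S) = S * Cᴴ * (C * S * Cᴴ + R)⁻¹ * C * S := by
    rw [conjTranspose_mul, hS.isHermitian.eq]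
    simp only [Matrix.mul_assoc]
  rwa [e2] at this

/-- Stability of the pilot-free Kalman channel predictor (deterministic
covariance-recursion form of Theorem 1): with `Σ₀ = I` and
`Σ_{k+1} = α² (Σ_k − Σ_k C_kᴴ (C_k Σ_k C_kᴴ + R_k)⁻¹ C_k Σ_k) + (1−α²) σ_v² I`,
every `Σ_k` is positive semidefinite and the time-averaged trace satisfies
`limsup_K (1/K) ∑_{k<K} Re Tr Σ_k ≤ N σ_v² / (1 − α²)`. -/
theorem kalman_covariance_recursion_stable
    {N m : ℕ} (hN : 0 < N) (hm : 0 < m)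
    (α : ℝ) (hα0 : 0 ≤ α) (hα1 : α < 1) (σv : ℝ) (hσv : 0 ≤ σv)
    (C : ℕ → Matrix (Fin m) (Fin N) ℂ)
    (R : ℕ → Matrix (Fin m) (Fin m) ℂ) (hR : ∀ k, (R k).PosDef)
    (Sg : ℕ → Matrix (Fin N) (Fin N) ℂ)
    (h0 : Sg 0 = 1)
    (hrec : ∀ k, Sg (k + 1) =
      ((α : ℂ) ^ 2) •
        (Sg k - Sg k * (C k)ᴴ * (C k * Sg k * (C k)ᴴ + R k)⁻¹ * C k * Sg k) +
      (((1 - α ^ 2) * σv ^ 2 : ℝ) : ℂ) • (1 : Matrix (Fin N) (Fin N) ℂ)) :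
    (∀ k, (Sg k).PosSemidef) ∧
    Filter.limsup
      (fun K : ℕ => (∑ k ∈ Finset.range K, ((Sg k).trace).re) / K) atTop
      ≤ (N : ℝ) * σv ^ 2 / (1 - α ^ 2) := by
  have hα2 : α ^ 2 < 1 := by nlinarith
  have hd : (0:ℝ) < 1 - α ^ 2 := by linarith
  have hc1 : (0:ℂ) ≤ (α : ℂ) ^ 2 := by
    rw [← Complex.ofReal_pow]
    exact_mod_cast (sq_nonneg α)
  have hc2 : (0:ℂ) ≤ (((1 - α ^ 2) * σv ^ 2 : ℝ) : ℂ) := by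
    exact_mod_cast mul_nonneg (le_of_lt hd) (sq_nonneg σv)
  -- positive semidefiniteness
  have hpsd : ∀ k, (Sg k).PosSemidef := by
    intro k
    induction k with
    | zero => rw [h0]; exact Matrix.PosSemidef.one
    | succ k ih =>
      rw [hrec k]
      exact (psd_smul_of_nonneg hc1 (schur_step (C k) (hR k) ih)).add
        (psd_smul_of_nonneg hc2 Matrix.PosSemidef.one)
  refine ⟨hpsd, ?_⟩
  -- one-step trace bound
  have htr : ∀ k, ((Sg (k+1)).trace).re ≤
      α ^ 2 * ((Sg k).trace).re + (1 - α ^ 2) * σv ^ 2 * N := by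
    intro k
    have hA : (C k * Sg k * (C k)ᴴ + R k).PosDef :=
      Matrix.PosDef.posSemidef_add ((hpsd k).mul_mul_conjTranspose_same (C k)) (hR k)
    have hP : (Sg k * (C k)ᴴ * (C k * Sg k * (C k)ᴴ + R k)⁻¹ * C k * Sg k).PosSemidef := by
      have h := hA.inv.posSemidef.mul_mul_conjTranspose_same (Sg k * (C k)ᴴ)
      have e : (Sg k * (C k)ᴴ)ᴴ = C k * Sg k := by
        rw [conjTranspose_mul, conjTranspose_conjTranspose, (hpsd k).isHermitian.eq]
      rw [e] at h
      have e2 : Sg k * (C k)ᴴ * (C k * Sg k * (C k)ᴴ + R k)⁻¹ * (C k * Sg k)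
          = Sg k * (C k)ᴴ * (C k * Sg k * (C k)ᴴ + R k)⁻¹ * C k * Sg k := by
        simp only [Matrix.mul_assoc]
      rwa [e2] at h
    have hPtr : 0 ≤ ((Sg k * (C k)ᴴ * (C k * Sg k * (C k)ᴴ + R k)⁻¹ * C k * Sg k).trace).re := by
      have := psd_trace_nonneg hP
      exact (Complex.le_def.mp this).1
    have htrace : (Sg (k+1)).trace =
        ((α ^ 2 : ℝ) : ℂ) * ((Sg k).trace -
          (Sg k * (C k)ᴴ * (C k * Sg k * (C k)ᴴ + R k)⁻¹ * C k * Sg k).trace) +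
        (((1 - α ^ 2) * σv ^ 2 : ℝ) : ℂ) * (N : ℂ) := by
      rw [hrec k, Matrix.trace_add, Matrix.trace_smul, Matrix.trace_smul, Matrix.trace_one,
        Matrix.trace_sub]
      simp only [smul_eq_mul, Fintype.card_fin]
      push_cast
      ring
    have hre : ((Sg (k+1)).trace).re =
        α ^ 2 * (((Sg k).trace).re -
          ((Sg k * (C k)ᴴ * (C k * Sg k * (C k)ᴴ + R k)⁻¹ * C k * Sg k).trace).re) +
        (1 - α ^ 2) * σv ^ 2 * N := by
      rw [htrace]
      simp [Complex.add_re, Complex.mul_re, Complex.sub_re, Complex.sub_im,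
        ← Complex.ofReal_pow, Complex.ofReal_re, Complex.ofReal_im,
        Complex.natCast_re, Complex.natCast_im]
      try ring
    rw [hre]
    nlinarith [sq_nonneg α]
  -- geometric bound on traces
  have tbound : ∀ k, ((Sg k).trace).re ≤ (α ^ 2) ^ k * N + σv ^ 2 * N := by
    intro k
    induction k with
    | zero =>
      simp only [h0, Matrix.trace_one, pow_zero, one_mul]
      have : ((Fintype.card (Fin N) : ℂ)).re = (N : ℝ) := by simp
      rw [this]
      nlinarith [mul_nonneg (sq_nonneg σv) (Nat.cast_nonneg N : (0:ℝ) ≤ N)]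
    | succ k ih =>
      calc ((Sg (k+1)).trace).re
          ≤ α ^ 2 * ((Sg k).trace).re + (1 - α ^ 2) * σv ^ 2 * N := htr k
        _ ≤ α ^ 2 * ((α ^ 2) ^ k * N + σv ^ 2 * N) + (1 - α ^ 2) * σv ^ 2 * N := by
            have h := mul_le_mul_of_nonneg_left ih (sq_nonneg α)
            linarith
        _ = (α ^ 2) ^ (k+1) * N + σv ^ 2 * N := by ring
  have tnonneg : ∀ k, 0 ≤ ((Sg k).trace).re := fun k =>
    (Complex.le_def.mp (psd_trace_nonneg (hpsd k))).1
  -- sum bound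
  have hg : ∀ K : ℕ, ∑ k ∈ Finset.range K, (α ^ 2) ^ k ≤ 1 / (1 - α ^ 2) := by
    intro K
    rw [geom_sum_eq (ne_of_lt hα2), div_le_iff_of_neg (by linarith : α ^ 2 - 1 < 0)]
    have h1 : 1 / (1 - α ^ 2) * (α ^ 2 - 1) = -1 := by field_simp; ring
    rw [h1]
    nlinarith [pow_nonneg (sq_nonneg α) K]
  have hsum : ∀ K : ℕ, (∑ k ∈ Finset.range K, ((Sg k).trace).re)
      ≤ N / (1 - α ^ 2) + K * (σv ^ 2 * N) := by
    intro K
    calc (∑ k ∈ Finset.range K, ((Sg k).trace).re)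
        ≤ ∑ k ∈ Finset.range K, ((α ^ 2) ^ k * N + σv ^ 2 * N) :=
          Finset.sum_le_sum fun k _ => tbound k
      _ = (∑ k ∈ Finset.range K, (α ^ 2) ^ k) * N + K * (σv ^ 2 * N) := by
          rw [Finset.sum_add_distrib, ← Finset.sum_mul, Finset.sum_const, nsmul_eq_mul, Finset.card_range]
      _ ≤ (1 / (1 - α ^ 2)) * N + K * (σv ^ 2 * N) := by
          have := mul_le_mul_of_nonneg_right (hg K) (Nat.cast_nonneg N : (0:ℝ) ≤ N)
          linarith
      _ = N / (1 - α ^ 2) + K * (σv ^ 2 * N) := by ring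
  -- limsup argument
  set f : ℕ → ℝ := fun K => (∑ k ∈ Finset.range K, ((Sg k).trace).re) / K with hf
  set g : ℕ → ℝ := fun K => (N / (1 - α ^ 2)) / K + σv ^ 2 * N with hgdef
  have hfg : ∀ᶠ K in atTop, f K ≤ g K := by
    filter_upwards [eventually_ge_atTop 1] with K hK
    have hK0 : (0:ℝ) < K := by exact_mod_cast hK
    have h1 : f K ≤ (N / (1 - α ^ 2) + K * (σv ^ 2 * N)) / K :=
      (div_le_div_iff_of_pos_right hK0).mpr (hsum K)
    have h2 : (N / (1 - α ^ 2) + (K:ℝ) * (σv ^ 2 * N)) / K = g K := by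
      rw [hgdef]
      field_simp
    rw [← h2]
    exact h1
  have hgt : Tendsto g atTop (nhds (0 + σv ^ 2 * N)) :=
    (tendsto_const_div_atTop_nhds_zero_nat _).add tendsto_const_nhds
  have hfnn : ∀ K, 0 ≤ f K := fun K =>
    div_nonneg (Finset.sum_nonneg fun k _ => tnonneg k) (Nat.cast_nonneg K)
  have h1 : limsup f atTop ≤ limsup g atTop :=
    limsup_le_limsup hfg (isCoboundedUnder_le_of_le atTop hfnn) hgt.isBoundedUnder_le
  have h2 : limsup g atTop = 0 + σv ^ 2 * N := hgt.limsup_eq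
  have h3 : σv ^ 2 * N ≤ (N : ℝ) * σv ^ 2 / (1 - α ^ 2) := by
    rw [le_div_iff₀ hd]
    nlinarith [mul_nonneg (sq_nonneg σv) (Nat.cast_nonneg N : (0:ℝ) ≤ N)]
  calc limsup f atTop ≤ limsup g atTop := h1
    _ = 0 + σv ^ 2 * N := h2
    _ ≤ (N : ℝ) * σv ^ 2 / (1 - α ^ 2) := by linarith
end

section
/- Let P be an S×S complex positive semidefinite matrix, R_eff an N×N complex positive definite matrix, Q an S×S complex Hermitian matrix, A an S×S complex matrix, and G an S×N complex matrix. Set M = R_eff + Gᴴ P G (which is positive definite, hence invertible) and K* = −M⁻¹ Gᴴ P A. Then for every N×S complex matrix K, Q + (K*)ᴴ R_eff K* + (A + G K*)ᴴ P (A + G K*) ⪯ Q + Kᴴ R_eff K + (A + G K)ᴴ P (A + G K) in the Loewner order. (This is the policy-improvement inequality in the proof of Theorem 4.) -/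
/-!
With `M = R_eff + Gᴴ P G` and `B = Gᴴ P A`, the cost
`Q + Kᴴ R_eff K + (A + G K)ᴴ P (A + G K)` is the quadratic form
`(Q + Aᴴ P A) + Kᴴ M K + Kᴴ B + Bᴴ K` in `K`. The gain `K* = -M⁻¹ B` solves the
stationarity equation `M K* = -B`, and completing the square gives
`cost K - cost K* = (K - K*)ᴴ M (K - K*)`, which is positive semidefinite since `M` is.
-/

open Matrix ComplexOrder

namespace Matrix

variable {m n k α : Type*} [Fintype m] [Fintype n] [Ring α] [StarRing α]

def quadLinForm (M : Matrix n n α) (B K : Matrix n k α) : Matrix k k α :=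
  Kᴴ * M * K + Kᴴ * B + Bᴴ * K

theorem add_conjTranspose_mul_mul_add_eq_quadLinForm (Q : Matrix k k α) {P : Matrix m m α}
    (hP : P.IsHermitian) (R : Matrix n n α) (A : Matrix m k α) (G : Matrix m n α)
    (K : Matrix n k α) :
    Q + Kᴴ * R * K + (A + G * K)ᴴ * P * (A + G * K) =
      Q + Aᴴ * P * A + quadLinForm (R + Gᴴ * P * G) (Gᴴ * P * A) K := by
  simp only [quadLinForm, conjTranspose_add, conjTranspose_mul, conjTranspose_conjTranspose,
    hP.eq, Matrix.add_mul, Matrix.mul_add, Matrix.mul_assoc]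
  abel

/-- Completing the square around a stationary point `K₀` of `quadLinForm M B`. -/
theorem quadLinForm_sub_quadLinForm_of_mul_eq_neg {M : Matrix n n α} (hM : M.IsHermitian)
    {B K₀ : Matrix n k α} (hK₀ : M * K₀ = -B) (K : Matrix n k α) :
    quadLinForm M B K - quadLinForm M B K₀ = (K - K₀)ᴴ * M * (K - K₀) := by
  obtain rfl : B = -(M * K₀) := by rw [hK₀, neg_neg]
  simp only [quadLinForm, conjTranspose_neg, conjTranspose_mul, hM.eq, conjTranspose_sub,
    Matrix.sub_mul, Matrix.mul_sub, Matrix.mul_neg, Matrix.neg_mul, Matrix.mul_assoc]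
  abel

end Matrix

theorem policy_improvement_loewner_general {S N : ℕ}
    (P : Matrix (Fin S) (Fin S) ℂ) (hP : P.PosSemidef)
    (Reff : Matrix (Fin N) (Fin N) ℂ) (hReff : Reff.PosDef)
    (Q : Matrix (Fin S) (Fin S) ℂ)
    (A : Matrix (Fin S) (Fin S) ℂ) (G : Matrix (Fin S) (Fin N) ℂ)
    (K : Matrix (Fin N) (Fin S) ℂ) :
    ((Q + Kᴴ * Reff * K + (A + G * K)ᴴ * P * (A + G * K)) -
      (Q + (-(Reff + Gᴴ * P * G)⁻¹ * Gᴴ * P * A)ᴴ * Reff *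
          (-(Reff + Gᴴ * P * G)⁻¹ * Gᴴ * P * A) +
        (A + G * (-(Reff + Gᴴ * P * G)⁻¹ * Gᴴ * P * A))ᴴ * P *
          (A + G * (-(Reff + Gᴴ * P * G)⁻¹ * Gᴴ * P * A)))).PosSemidef := by
  set M := Reff + Gᴴ * P * G
  have hM : M.PosDef := hReff.add_posSemidef (hP.conjTranspose_mul_mul_same G)
  have hstat : M * (-M⁻¹ * Gᴴ * P * A) = -(Gᴴ * P * A) := by
    simp only [Matrix.neg_mul, Matrix.mul_neg, Matrix.mul_assoc,
      mul_nonsing_inv_cancel_left _ _ ((isUnit_iff_isUnit_det M).1 hM.isUnit)]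
  rw [add_conjTranspose_mul_mul_add_eq_quadLinForm Q hP.isHermitian,
    add_conjTranspose_mul_mul_add_eq_quadLinForm Q hP.isHermitian, add_sub_add_left_eq_sub,
    quadLinForm_sub_quadLinForm_of_mul_eq_neg hM.isHermitian hstat]
  exact hM.posSemidef.conjTranspose_mul_mul_same _

/-- Policy-improvement inequality (proof of Theorem 4): with
`M = R_eff + Gᴴ P G` and `K* = −M⁻¹ Gᴴ P A`, the gain `K*` minimizes
`Q + Kᴴ R_eff K + (A + G K)ᴴ P (A + G K)` in the Loewner order. -/
theorem policy_improvement_loewner {S N : ℕ}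
    (P : Matrix (Fin S) (Fin S) ℂ) (hP : P.PosSemidef)
    (Reff : Matrix (Fin N) (Fin N) ℂ) (hReff : Reff.PosDef)
    (Q : Matrix (Fin S) (Fin S) ℂ) (hQ : Q.IsHermitian)
    (A : Matrix (Fin S) (Fin S) ℂ) (G : Matrix (Fin S) (Fin N) ℂ)
    (K : Matrix (Fin N) (Fin S) ℂ) :
    ((Q + Kᴴ * Reff * K + (A + G * K)ᴴ * P * (A + G * K)) -
      (Q + (-(Reff + Gᴴ * P * G)⁻¹ * Gᴴ * P * A)ᴴ * Reff *
          (-(Reff + Gᴴ * P * G)⁻¹ * Gᴴ * P * A) +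
        (A + G * (-(Reff + Gᴴ * P * G)⁻¹ * Gᴴ * P * A))ᴴ * P *
          (A + G * (-(Reff + Gᴴ * P * G)⁻¹ * Gᴴ * P * A)))).PosSemidef :=
  policy_improvement_loewner_general P hP Reff hReff Q A G K
end

section
/- Let A be an n×n complex matrix that is Schur stable, i.e., every element μ of the spectrum of A over ℂ satisfies ‖μ‖ < 1, and let Δ be an n×n complex Hermitian matrix such that Δ − Aᴴ Δ A is positive semidefinite. Then Δ is positive semidefinite. (This Stein-inequality positivity fact is the core of the uniqueness argument in the proof of Theorem 4: applying it to the difference of two stabilizing solutions in both directions forces the difference to vanish.) -/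
open Matrix ComplexOrder

open Filter ContinuousMultilinearMap
open scoped NNReal ENNReal

attribute [local instance] Matrix.linftyOpNormedRing Matrix.linftyOpNormedAlgebra

/-- Stein-inequality positivity: if `A` is Schur stable, `Δ` is Hermitian and
`Δ − Aᴴ Δ A` is positive semidefinite, then `Δ` is positive semidefinite. -/
theorem posSemidef_of_stein_inequality {n : ℕ}
    (A : Matrix (Fin n) (Fin n) ℂ)
    (hA : ∀ μ ∈ spectrum ℂ A, ‖μ‖ < 1)
    (Δ : Matrix (Fin n) (Fin n) ℂ) (hΔ : Δ.IsHermitian)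
    (h : (Δ - Aᴴ * Δ * A).PosSemidef) :
    Δ.PosSemidef := by
  rcases Nat.eq_zero_or_pos n with hn | hn
  · subst hn
    exact .of_dotProduct_mulVec_nonneg hΔ fun x => by simp [dotProduct]
  haveI : Nonempty (Fin n) := Fin.pos_iff_nonempty.mp hn
  -- powers of A tend to zero
  have hpow : Tendsto (fun k => ‖A ^ k‖) atTop (nhds 0) := by
    have hrad : spectralRadius ℂ A < 1 := by
      refine spectrum.spectralRadius_lt_of_forall_lt A fun z hz => ?_
      exact_mod_cast hA z hz
    have hinv : (1 : ℝ≥0∞) < (spectralRadius ℂ A)⁻¹ := ENNReal.one_lt_inv.mpr hrad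
    obtain ⟨r, hr1, hr2⟩ := ENNReal.lt_iff_exists_nnreal_btwn.mp hinv
    have hrpos : 0 < r := by
      have := hr1
      rw [← ENNReal.coe_one, ENNReal.coe_lt_coe] at this
      exact lt_trans one_pos this
    let p : FormalMultilinearSeries ℂ ℂ (Matrix (Fin n) (Fin n) ℂ) :=
      fun k => ContinuousMultilinearMap.mkPiRing ℂ (Fin k) (A ^ k)
    have H₁ := (spectrum.differentiableOn_inverse_one_sub_smul hr2).hasFPowerSeriesOnBall hrpos
    have hr : (r : ℝ≥0∞) ≤ p.radius :=
      ((spectrum.hasFPowerSeriesOnBall_inverse_one_sub_smul ℂ A).exchange_radius H₁).r_le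
    have hsum := p.summable_norm_mul_pow (r := 1) (lt_of_lt_of_le (by exact_mod_cast hr1) hr)
    have hsum' : Summable fun k => ‖A ^ k‖ := by
      refine hsum.congr fun k => ?_
      simp only [p, NNReal.coe_one, one_pow, mul_one]
      exact ContinuousMultilinearMap.norm_mkPiRing (ι := Fin k) (𝕜 := ℂ) (A ^ k)
    simpa using hsum'.tendsto_atTop_zero
  refine .of_dotProduct_mulVec_nonneg hΔ fun x => ?_
  -- the quadratic form along the orbit
  set y : ℕ → Fin n → ℂ := fun k => (A ^ k) *ᵥ x with hy
  set g : ℕ → ℝ := fun k => (star (y k) ⬝ᵥ Δ *ᵥ y k).re with hg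
  -- key identity
  have key : ∀ v : Fin n → ℂ,
      star v ⬝ᵥ (Aᴴ * Δ * A) *ᵥ v = star (A *ᵥ v) ⬝ᵥ Δ *ᵥ (A *ᵥ v) := by
    intro v
    simp [star_mulVec, dotProduct_mulVec, vecMul_vecMul, Matrix.mul_assoc]
  -- antitone step
  have step : ∀ k, g (k + 1) ≤ g k := by
    intro k
    have h2 := h.dotProduct_mulVec_nonneg (y k)
    rw [sub_mulVec, dotProduct_sub, key] at h2
    have him := (Complex.le_def.mp h2).1
    have hstep : y (k + 1) = A *ᵥ y k := by
      simp [hy, pow_succ', mulVec_mulVec]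
    rw [hg]
    simp only [hstep]
    rw [Complex.zero_re, Complex.sub_re] at him
    linarith
  -- antitone, hence g k ≤ g 0
  have hle : ∀ k, g k ≤ g 0 := fun k => by
    induction k with
    | zero => exact le_refl _
    | succ m ih => exact le_trans (step m) ih
  -- g tends to zero
  have hy0 : Tendsto y atTop (nhds 0) := by
    rw [tendsto_zero_iff_norm_tendsto_zero]
    refine squeeze_zero (fun k => norm_nonneg _) (fun k => ?_)
      (by simpa using hpow.mul_const ‖x‖)
    exact Matrix.linfty_opNorm_mulVec _ _
  have hcont : Continuous fun v : Fin n → ℂ => (star v ⬝ᵥ Δ *ᵥ v) := by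
    simp only [dotProduct, mulVec]
    refine continuous_finset_sum _ fun i _ => ?_
    exact ((continuous_star.comp (continuous_apply i)).mul
      (continuous_finset_sum _ fun j _ => continuous_const.mul (continuous_apply j)))
  have h1 : Tendsto (fun k => star (y k) ⬝ᵥ Δ *ᵥ y k) atTop (nhds 0) := by
    have := (hcont.tendsto 0).comp hy0
    simpa [Function.comp_def] using this
  have hg0 : Tendsto g atTop (nhds 0) := by
    simpa [Function.comp_def, hg] using (Complex.continuous_re.tendsto 0).comp h1
  -- conclude
  have h0 : (0:ℝ) ≤ g 0 := le_of_tendsto hg0 (Eventually.of_forall hle)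
  -- quadratic form is real
  have hreal : star (star x ⬝ᵥ Δ *ᵥ x) = star x ⬝ᵥ Δ *ᵥ x := by
    calc star (star x ⬝ᵥ Δ *ᵥ x) = x ⬝ᵥ star (Δ *ᵥ x) := by
          rw [star_dotProduct]; simp [dotProduct_comm]
      _ = star x ⬝ᵥ Δ *ᵥ x := by
          rw [star_mulVec, hΔ.eq, dotProduct_comm, dotProduct_mulVec]
  rw [Complex.le_def]
  constructor
  · simpa [hg, hy] using h0
  · have := congrArg Complex.im hreal
    simp only [Complex.star_def, Complex.conj_im] at this
    simp only [Complex.zero_im]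
    linarith
end

section
/- Let Q be an S×S complex positive definite matrix, R an N×N complex positive semidefinite matrix, F an S×S complex matrix, K an N×S complex matrix, and let P be an S×S complex positive semidefinite matrix satisfying the policy-evaluation identity P = Q + Kᴴ R K + Fᴴ P F. Then P is positive definite and F is Schur stable, i.e., every element μ of the spectrum of F over ℂ satisfies ‖μ‖ < 1. (This shows that any positive semidefinite solution of the coupled Lyapunov/policy-evaluation equations with Q ≻ 0 is automatically stabilizing, as used in the proof of Theorem 4.) -/
open Matrix ComplexOrder

lemma quad_split {S N : ℕ}
    (Q : Matrix (Fin S) (Fin S) ℂ)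
    (R : Matrix (Fin N) (Fin N) ℂ)
    (F : Matrix (Fin S) (Fin S) ℂ) (K : Matrix (Fin N) (Fin S) ℂ)
    (P : Matrix (Fin S) (Fin S) ℂ) (x : Fin S → ℂ) :
    star x ⬝ᵥ ((Q + Kᴴ * R * K + Fᴴ * P * F) *ᵥ x)
      = star x ⬝ᵥ (Q *ᵥ x) + star (K *ᵥ x) ⬝ᵥ (R *ᵥ (K *ᵥ x))
        + star (F *ᵥ x) ⬝ᵥ (P *ᵥ (F *ᵥ x)) := by
  simp only [add_mulVec, dotProduct_add]
  congr 1
  · congr 1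
    rw [← mulVec_mulVec, ← mulVec_mulVec, dotProduct_mulVec, ← star_mulVec]
  · rw [← mulVec_mulVec, ← mulVec_mulVec, dotProduct_mulVec, ← star_mulVec]

/-- Any positive semidefinite solution of the policy-evaluation identity
`P = Q + Kᴴ R K + Fᴴ P F` with `Q ≻ 0` is positive definite and the closed-loop
matrix `F` is Schur stable. -/
theorem policy_evaluation_stabilizing {S N : ℕ}
    (Q : Matrix (Fin S) (Fin S) ℂ) (hQ : Q.PosDef)
    (R : Matrix (Fin N) (Fin N) ℂ) (hR : R.PosSemidef)
    (F : Matrix (Fin S) (Fin S) ℂ) (K : Matrix (Fin N) (Fin S) ℂ)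
    (P : Matrix (Fin S) (Fin S) ℂ) (hP : P.PosSemidef)
    (heq : P = Q + Kᴴ * R * K + Fᴴ * P * F) :
    P.PosDef ∧ ∀ μ ∈ spectrum ℂ F, ‖μ‖ < 1 := by
  have hPdef : P.PosDef := by
    refine PosDef.of_dotProduct_mulVec_pos hP.1 fun x hx => ?_
    rw [heq, quad_split]
    have h1 := hQ.dotProduct_mulVec_pos hx
    have h2 := hR.dotProduct_mulVec_nonneg (K *ᵥ x)
    have h3 := hP.dotProduct_mulVec_nonneg (F *ᵥ x)
    have := add_pos_of_pos_of_nonneg (add_pos_of_pos_of_nonneg h1 h2) h3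
    exact this
  refine ⟨hPdef, fun μ hμ => ?_⟩
  -- get an eigenvector
  have hμ' : μ ∈ spectrum ℂ (Matrix.toLin' F) := by
    rwa [← AlgEquiv.spectrum_eq (Matrix.toLinAlgEquiv' (R := ℂ) (n := Fin S)) F] at hμ
  have hev : Module.End.HasEigenvalue (Matrix.toLin' F) μ :=
    (Module.End.hasEigenvalue_iff_mem_spectrum).2 hμ'
  obtain ⟨v, hv⟩ := hev.exists_hasEigenvector
  have hvne : v ≠ 0 := hv.2
  have hFv : F *ᵥ v = μ • v := by
    have := hv.apply_eq_smul
    simpa [Matrix.toLin'_apply] using this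
  -- quadratic form identity at v
  have key : star v ⬝ᵥ (P *ᵥ v)
      = star v ⬝ᵥ (Q *ᵥ v) + star (K *ᵥ v) ⬝ᵥ (R *ᵥ (K *ᵥ v))
        + (starRingEnd ℂ μ * μ) * (star v ⬝ᵥ (P *ᵥ v)) := by
    conv_lhs => rw [heq, quad_split]
    rw [hFv]
    congr 1
    simp [mulVec_smul, star_smul, smul_dotProduct, dotProduct_smul, smul_smul]
    ring
  set a := star v ⬝ᵥ (P *ᵥ v) with ha
  set q := star v ⬝ᵥ (Q *ᵥ v) with hq
  set r := star (K *ᵥ v) ⬝ᵥ (R *ᵥ (K *ᵥ v)) with hr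
  have hapos : 0 < a := hPdef.dotProduct_mulVec_pos hvne
  have hqpos : 0 < q := hQ.dotProduct_mulVec_pos hvne
  have hrnn : 0 ≤ r := hR.dotProduct_mulVec_nonneg (K *ᵥ v)
  -- take real parts
  have hμsq : starRingEnd ℂ μ * μ = ((‖μ‖ ^ 2 : ℝ) : ℂ) := by
    rw [mul_comm, Complex.mul_conj]
    norm_cast
    rw [Complex.normSq_eq_norm_sq]
  rw [hμsq] at key
  obtain ⟨hare, _⟩ := Complex.lt_def.mp hapos
  obtain ⟨hqre, _⟩ := Complex.lt_def.mp hqpos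
  obtain ⟨hrre, _⟩ := Complex.le_def.mp hrnn
  simp only [Complex.zero_re] at hare hqre hrre
  have hkre := congrArg Complex.re key
  simp only [Complex.add_re, Complex.mul_re, Complex.ofReal_re, Complex.ofReal_im,
    zero_mul, sub_zero] at hkre
  have hsq : ‖μ‖ ^ 2 < 1 := by nlinarith
  nlinarith [norm_nonneg μ]
end

section
/- Let Q be an S×S complex positive definite matrix, R_eff an N×N complex positive definite matrix, A an S×S complex matrix, G an S×N complex matrix, and K an N×S complex matrix. Suppose P is an S×S complex positive semidefinite matrix satisfying the policy-evaluation identity P = Q + Kᴴ R_eff K + (A + G K)ᴴ P (A + G K). Define the improved gain K* = −(R_eff + Gᴴ P G)⁻¹ Gᴴ P A. Then A + G K* is Schur stable, i.e., every element μ of the spectrum of A + G K* over ℂ satisfies ‖μ‖ < 1. (This is the 'improved policy is stabilizing' step of the policy-iteration argument in the proof of Theorem 4.) -/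
open Matrix ComplexOrder
set_option maxHeartbeats 1000000

/-- The improved policy is stabilizing (policy-iteration step of the proof of
Theorem 4): if `P ⪰ 0` satisfies `P = Q + Kᴴ R_eff K + (A + G K)ᴴ P (A + G K)`
with `Q ≻ 0` and `R_eff ≻ 0`, then the improved gain
`K* = −(R_eff + Gᴴ P G)⁻¹ Gᴴ P A` renders `A + G K*` Schur stable. -/
theorem improved_policy_stabilizing {S N : ℕ}
    (Q : Matrix (Fin S) (Fin S) ℂ) (hQ : Q.PosDef)
    (Reff : Matrix (Fin N) (Fin N) ℂ) (hReff : Reff.PosDef)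
    (A : Matrix (Fin S) (Fin S) ℂ) (G : Matrix (Fin S) (Fin N) ℂ)
    (K : Matrix (Fin N) (Fin S) ℂ)
    (P : Matrix (Fin S) (Fin S) ℂ) (hP : P.PosSemidef)
    (heq : P = Q + Kᴴ * Reff * K + (A + G * K)ᴴ * P * (A + G * K)) :
    ∀ μ ∈ spectrum ℂ (A + G * (-(Reff + Gᴴ * P * G)⁻¹ * Gᴴ * P * A)), ‖μ‖ < 1 := by
  set M : Matrix (Fin N) (Fin N) ℂ := Reff + Gᴴ * P * G with hMdef
  have hM : M.PosDef := hReff.add_posSemidef (hP.conjTranspose_mul_mul_same G)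
  set Ks : Matrix (Fin N) (Fin S) ℂ := -(Reff + Gᴴ * P * G)⁻¹ * Gᴴ * P * A with hKsdef
  set Acl : Matrix (Fin S) (Fin S) ℂ := A + G * Ks with hAcl
  -- M * Ks = -(Gᴴ * P * A)
  have hMdet : IsUnit M.det := (Matrix.isUnit_iff_isUnit_det M).1 hM.isUnit
  have h1 : Gᴴ * (P * A) = -(M * Ks) := by
    rw [hKsdef]
    simp only [Matrix.neg_mul, Matrix.mul_neg, neg_neg, ← Matrix.mul_assoc]
    rw [Matrix.mul_nonsing_inv _ hMdet, Matrix.one_mul]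
  have h2 : Aᴴ * (P * G) = -(Ksᴴ * M) := by
    have := congrArg conjTranspose h1
    simpa [Matrix.conjTranspose_mul, Matrix.mul_assoc, hM.isHermitian.eq,
      hP.isHermitian.eq] using this
  -- completion of squares
  have expand : ∀ J : Matrix (Fin N) (Fin S) ℂ,
      Jᴴ * Reff * J + (A + G * J)ᴴ * P * (A + G * J) =
      Aᴴ * (P * A) + Jᴴ * (M * J) + Jᴴ * (Gᴴ * (P * A)) + Aᴴ * (P * G) * J := by
    intro J
    simp only [hMdef, conjTranspose_add, conjTranspose_mul, Matrix.add_mul,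
      Matrix.mul_add, Matrix.mul_assoc]
    abel
  have key : Kᴴ * Reff * K + (A + G * K)ᴴ * P * (A + G * K) =
      Ksᴴ * Reff * Ks + (A + G * Ks)ᴴ * P * (A + G * Ks) + (K - Ks)ᴴ * M * (K - Ks) := by
    rw [expand K, expand Ks, h1, h2]
    simp only [conjTranspose_sub, Matrix.sub_mul, Matrix.mul_sub, Matrix.neg_mul,
      Matrix.mul_neg, Matrix.mul_assoc]
    abel
  set L : Matrix (Fin S) (Fin S) ℂ := Q + Ksᴴ * Reff * Ks + (K - Ks)ᴴ * M * (K - Ks) with hLdef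
  have hL : L.PosDef :=
    (hQ.add_posSemidef (hReff.posSemidef.conjTranspose_mul_mul_same Ks)).add_posSemidef
      (hM.posSemidef.conjTranspose_mul_mul_same (K - Ks))
  have hPL : P = L + Aclᴴ * P * Acl := by
    conv_lhs => rw [heq, add_assoc, key]
    rw [hLdef, hAcl]
    abel
  -- eigenvalue argument
  intro μ hμ
  rw [spectrum.mem_iff] at hμ
  have hdet : (algebraMap ℂ (Matrix (Fin S) (Fin S) ℂ) μ - Acl).det = 0 := by
    by_contra h
    exact hμ ((Matrix.isUnit_iff_isUnit_det _).2 (isUnit_iff_ne_zero.2 h))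
  obtain ⟨v, hv0, hv⟩ := (Matrix.exists_mulVec_eq_zero_iff).2 hdet
  have hev : Acl *ᵥ v = μ • v := by
    have : (algebraMap ℂ (Matrix (Fin S) (Fin S) ℂ) μ) *ᵥ v - Acl *ᵥ v = 0 := by
      rw [← Matrix.sub_mulVec]; exact hv
    have h' : (algebraMap ℂ (Matrix (Fin S) (Fin S) ℂ) μ) *ᵥ v = μ • v := by
      rw [Algebra.algebraMap_eq_smul_one, Matrix.smul_mulVec, Matrix.one_mulVec]
    rw [h'] at this
    exact (sub_eq_zero.mp this).symm
  -- quadratic form computation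
  set q : ℂ := star v ⬝ᵥ (P *ᵥ v) with hqdef
  have hq : 0 ≤ q := hP.dotProduct_mulVec_nonneg v
  have hAv : star v ⬝ᵥ ((Aclᴴ * P * Acl) *ᵥ v) = (starRingEnd ℂ) μ * (μ * q) := by
    rw [← Matrix.mulVec_mulVec, ← Matrix.mulVec_mulVec, hev, Matrix.mulVec_smul,
      Matrix.dotProduct_mulVec, ← Matrix.star_mulVec, hev, star_smul,
      smul_dotProduct, dotProduct_smul]
    rfl
  have hvL : star v ⬝ᵥ (L *ᵥ v) = (1 - (starRingEnd ℂ) μ * μ) * q := by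
    have hq' : q = star v ⬝ᵥ (L *ᵥ v) + (starRingEnd ℂ) μ * (μ * q) := by
      rw [hqdef]
      conv_lhs => rw [hPL]
      rw [Matrix.add_mulVec, dotProduct_add, hAv]
    ring_nf
    ring_nf at hq'
    linear_combination -hq'
  have hLpos : 0 < star v ⬝ᵥ (L *ᵥ v) := hL.dotProduct_mulVec_pos hv0
  rw [hvL] at hLpos
  by_contra hcon
  push_neg at hcon
  have hns : (1 : ℝ) ≤ ‖μ‖ ^ 2 := by nlinarith [norm_nonneg μ]
  have hfact : (1 - (starRingEnd ℂ) μ * μ) = ((1 - ‖μ‖ ^ 2 : ℝ) : ℂ) := by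
    have habs : (‖μ‖ ^ 2 : ℝ) = Complex.normSq μ := by
      rw [Complex.sq_norm]
    rw [mul_comm, Complex.mul_conj, habs]
    push_cast
    ring
  rw [hfact] at hLpos
  have hle : ((1 - ‖μ‖ ^ 2 : ℝ) : ℂ) * q ≤ 0 := by
    have h1' : ((1 - ‖μ‖ ^ 2 : ℝ) : ℂ) ≤ 0 := by
      rw [show (0:ℂ) = ((0:ℝ):ℂ) by norm_num, Complex.real_le_real]
      linarith
    have := mul_nonneg (neg_nonneg.2 h1') hq
    rw [neg_mul] at this
    linarith [this]
  exact absurd (lt_of_lt_of_le hLpos hle) (lt_irrefl 0)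
end

section
/- Consider the coupled algebraic Riccati equation (CARE) with data: a positive integer L, a mode map σ : Fin L → Fin L, an S×S complex matrix A, an S×N complex matrix B, channel representatives Ĥ_ℓ (N×N complex matrices, ℓ ∈ Fin L), an S×S complex positive definite matrix Q, an N×N complex positive definite matrix R, and an N×N complex positive semidefinite matrix Σ̄. For a family P = (P_ℓ)_{ℓ ∈ Fin L} of S×S complex matrices set M_ℓ(P) = Ĥ_ℓᴴ Bᴴ P_{σ(ℓ)} B Ĥ_ℓ + R + Re(Tr(Bᴴ P_{σ(ℓ)} B Σ̄))·I_N and K_ℓ(P) = −M_ℓ(P)⁻¹ Ĥ_ℓᴴ Bᴴ P_{σ(ℓ)} A; say P satisfies the CARE if P_ℓ = Q + Aᴴ P_{σ(ℓ)} A − Aᴴ P_{σ(ℓ)} B Ĥ_ℓ M_ℓ(P)⁻¹ Ĥ_ℓᴴ Bᴴ P_{σ(ℓ)} A for every ℓ; say P is stabilizing if for every ℓ the closed-loop matrix A + B Ĥ_ℓ K_ℓ(P) is Schur stable. Theorem (uniqueness part of Theorem 4): if P and S are two families of positive semidefinite matrices that both satisfy the CARE and are both stabilizing, then P_ℓ =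 S_ℓ for every ℓ ∈ Fin L. -/
open Matrix ComplexOrder

/-- The effective input-penalty matrix
`M_ℓ(P) = Ĥ_ℓᴴ Bᴴ P_{σ ℓ} B Ĥ_ℓ + R + Re(Tr(Bᴴ P_{σ ℓ} B Σ̄)) I`. -/
noncomputable def careM {L S N : ℕ} (σ : Fin L → Fin L)
    (B : Matrix (Fin S) (Fin N) ℂ)
    (H : Fin L → Matrix (Fin N) (Fin N) ℂ)
    (R Sb : Matrix (Fin N) (Fin N) ℂ)
    (P : Fin L → Matrix (Fin S) (Fin S) ℂ) (ℓ : Fin L) :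
    Matrix (Fin N) (Fin N) ℂ :=
  (H ℓ)ᴴ * Bᴴ * P (σ ℓ) * B * H ℓ + R +
    (((Bᴴ * P (σ ℓ) * B * Sb).trace.re : ℝ) : ℂ) • (1 : Matrix (Fin N) (Fin N) ℂ)

/-- The mode-dependent feedback gain `K_ℓ(P) = −M_ℓ(P)⁻¹ Ĥ_ℓᴴ Bᴴ P_{σ ℓ} A`. -/
noncomputable def careK {L S N : ℕ} (σ : Fin L → Fin L)
    (A : Matrix (Fin S) (Fin S) ℂ) (B : Matrix (Fin S) (Fin N) ℂ)
    (H : Fin L → Matrix (Fin N) (Fin N) ℂ)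
    (R Sb : Matrix (Fin N) (Fin N) ℂ)
    (P : Fin L → Matrix (Fin S) (Fin S) ℂ) (ℓ : Fin L) :
    Matrix (Fin N) (Fin S) ℂ :=
  -(careM σ B H R Sb P ℓ)⁻¹ * (H ℓ)ᴴ * Bᴴ * P (σ ℓ) * A

/-- The family `P` satisfies the coupled algebraic Riccati equation (CARE). -/
def SatisfiesCARE {L S N : ℕ} (σ : Fin L → Fin L)
    (A : Matrix (Fin S) (Fin S) ℂ) (B : Matrix (Fin S) (Fin N) ℂ)
    (H : Fin L → Matrix (Fin N) (Fin N) ℂ)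
    (Q : Matrix (Fin S) (Fin S) ℂ)
    (R Sb : Matrix (Fin N) (Fin N) ℂ)
    (P : Fin L → Matrix (Fin S) (Fin S) ℂ) : Prop :=
  ∀ ℓ, P ℓ = Q + Aᴴ * P (σ ℓ) * A -
    Aᴴ * P (σ ℓ) * B * H ℓ * (careM σ B H R Sb P ℓ)⁻¹ *
      (H ℓ)ᴴ * Bᴴ * P (σ ℓ) * A

/-- The family `P` is stabilizing: every closed-loop matrix
`A + B Ĥ_ℓ K_ℓ(P)` is Schur stable. -/
def IsStabilizingCARE {L S N : ℕ} (σ : Fin L → Fin L)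
    (A : Matrix (Fin S) (Fin S) ℂ) (B : Matrix (Fin S) (Fin N) ℂ)
    (H : Fin L → Matrix (Fin N) (Fin N) ℂ)
    (R Sb : Matrix (Fin N) (Fin N) ℂ)
    (P : Fin L → Matrix (Fin S) (Fin S) ℂ) : Prop :=
  ∀ ℓ, ∀ μ ∈ spectrum ℂ (A + B * H ℓ * careK σ A B H R Sb P ℓ), ‖μ‖ < 1



private lemma cu_smul_psd {n : ℕ} {c : ℝ} (hc : 0 ≤ c) {X : Matrix (Fin n) (Fin n) ℂ}
    (hX : X.PosSemidef) : ((c : ℂ) • X).PosSemidef := by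
  refine Matrix.PosSemidef.of_dotProduct_mulVec_nonneg ?_ ?_
  · show ((c : ℂ) • X)ᴴ = _
    rw [conjTranspose_smul, hX.1]
    simp [Complex.conj_ofReal]
  · intro x
    rw [smul_mulVec, dotProduct_smul, smul_eq_mul]
    obtain ⟨hre, him⟩ := Complex.nonneg_iff.mp (hX.dotProduct_mulVec_nonneg x)
    rw [Complex.nonneg_iff]
    constructor
    · rw [Complex.mul_re, Complex.ofReal_re, Complex.ofReal_im]
      simp [← him]
      exact mul_nonneg hc hre
    · rw [Complex.mul_im, Complex.ofReal_re, Complex.ofReal_im]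
      simp [← him]

private lemma cu_trace_nonneg {n : ℕ} {X : Matrix (Fin n) (Fin n) ℂ}
    (hX : X.PosSemidef) : 0 ≤ X.trace.re := by
  have h : ∀ i, 0 ≤ (X i i).re := by
    intro i
    have := hX.re_dotProduct_nonneg (Pi.single i 1)
    simpa [dotProduct, mulVec, Pi.single_apply, Finset.sum_ite_eq] using this
  have : X.trace = ∑ i, X i i := rfl
  rw [this, Complex.re_sum]
  exact Finset.sum_nonneg fun i _ => h i

section
open scoped MatrixOrder
private lemma cu_trace_mul_nonneg {n : ℕ} {U V : Matrix (Fin n) (Fin n) ℂ}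
    (hU : U.PosSemidef) (hV : V.PosSemidef) : 0 ≤ (U * V).trace.re := by
  classical
  have hs : (CFC.sqrt V).PosSemidef := (CFC.sqrt_nonneg V).posSemidef
  have hrw : (U * V).trace = (CFC.sqrt V * U * CFC.sqrt V).trace := by
    conv_lhs => rw [← CFC.sqrt_mul_sqrt_self V hV.nonneg]
    rw [← Matrix.mul_assoc, Matrix.trace_mul_comm, ← Matrix.mul_assoc]
  rw [hrw]
  have : (CFC.sqrt V * U * CFC.sqrt V).PosSemidef := by
    have := hU.conjTranspose_mul_mul_same (CFC.sqrt V)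
    rwa [hs.1] at this
  exact cu_trace_nonneg this
end

private lemma cu_herm_qf_real {n : ℕ} {X : Matrix (Fin n) (Fin n) ℂ}
    (hX : X.IsHermitian) (x : Fin n → ℂ) :
    (star x ⬝ᵥ X *ᵥ x).im = 0 := by
  have h : star (star x ⬝ᵥ X *ᵥ x) = star x ⬝ᵥ X *ᵥ x := by
    calc star (star x ⬝ᵥ X *ᵥ x) = star (X *ᵥ x) ⬝ᵥ star (star x) := by
          rw [← star_dotProduct_star]
      _ = (star x ᵥ* Xᴴ) ⬝ᵥ x := by rw [star_mulVec, star_star]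
      _ = star x ⬝ᵥ (Xᴴ *ᵥ x) := by rw [dotProduct_mulVec]
      _ = star x ⬝ᵥ X *ᵥ x := by rw [hX]
  rw [Complex.star_def] at h
  exact Complex.conj_eq_iff_im.mp h

private lemma cu_conj_diag_psd {n : ℕ} (U : Matrix (Fin n) (Fin n) ℂ) {d : Fin n → ℝ}
    (hd : ∀ i, 0 ≤ d i) :
    (U * diagonal (fun i => (d i : ℂ)) * star U).PosSemidef := by
  have h : (diagonal (fun i => ((d i : ℝ) : ℂ))).PosSemidef :=
    posSemidef_diagonal_iff.mpr fun i => Complex.zero_le_real.mpr (hd i)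
  have := h.mul_mul_conjTranspose_same U
  rwa [← Matrix.star_eq_conjTranspose] at this

private lemma cu_smul_one_sub_psd {n : ℕ} {X : Matrix (Fin n) (Fin n) ℂ}
    (hX : X.IsHermitian) {r : ℝ} (h : ∀ i, hX.eigenvalues i ≤ r) :
    ((r : ℂ) • 1 - X).PosSemidef := by
  classical
  set U : Matrix (Fin n) (Fin n) ℂ := (hX.eigenvectorUnitary : Matrix (Fin n) (Fin n) ℂ)
  have hU : U * star U = 1 := Matrix.mem_unitaryGroup_iff.mp hX.eigenvectorUnitary.2
  have key : (r : ℂ) • 1 - X = U * diagonal (fun i => ((r - hX.eigenvalues i : ℝ) : ℂ)) * star U := by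
    conv_lhs => rw [hX.spectral_theorem, show ((r:ℂ) • (1 : Matrix (Fin n) (Fin n) ℂ))
      = U * ((r:ℂ) • 1) * star U by rw [Matrix.mul_smul, Matrix.mul_one, Matrix.smul_mul, hU]]
    rw [Unitary.conjStarAlgAut_apply]
    rw [← Matrix.sub_mul, ← Matrix.mul_sub]
    congr 1
    rw [smul_one_eq_diagonal, diagonal_sub]
    congr 1
    ext i
    push_cast
    simp [Function.comp]
  rw [key]
  exact cu_conj_diag_psd U fun i => sub_nonneg.mpr (h i)

private lemma cu_sub_smul_one_psd {n : ℕ} {X : Matrix (Fin n) (Fin n) ℂ}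
    (hX : X.IsHermitian) {r : ℝ} (h : ∀ i, r ≤ hX.eigenvalues i) :
    (X - (r : ℂ) • 1).PosSemidef := by
  classical
  set U : Matrix (Fin n) (Fin n) ℂ := (hX.eigenvectorUnitary : Matrix (Fin n) (Fin n) ℂ)
  have hU : U * star U = 1 := Matrix.mem_unitaryGroup_iff.mp hX.eigenvectorUnitary.2
  have key : X - (r : ℂ) • 1 = U * diagonal (fun i => ((hX.eigenvalues i - r : ℝ) : ℂ)) * star U := by
    conv_lhs => rw [hX.spectral_theorem, show ((r:ℂ) • (1 : Matrix (Fin n) (Fin n) ℂ))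
      = U * ((r:ℂ) • 1) * star U by rw [Matrix.mul_smul, Matrix.mul_one, Matrix.smul_mul, hU]]
    rw [Unitary.conjStarAlgAut_apply]
    rw [← Matrix.sub_mul, ← Matrix.mul_sub]
    congr 1
    rw [smul_one_eq_diagonal, diagonal_sub]
    congr 1
    ext i
    push_cast
    simp [Function.comp]
  rw [key]
  exact cu_conj_diag_psd U fun i => sub_nonneg.mpr (h i)

private lemma cu_exists_scale {n : ℕ} (hn : Nonempty (Fin n)) {X Q : Matrix (Fin n) (Fin n) ℂ}
    (hX : X.PosSemidef) (hQ : Q.PosDef) :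
    ∃ c : ℝ, 0 ≤ c ∧ ((c : ℂ) • Q - X).PosSemidef := by
  classical
  set t : ℝ := ∑ i, hX.1.eigenvalues i with ht
  have ht0 : 0 ≤ t := Finset.sum_nonneg fun i _ => hX.eigenvalues_nonneg i
  have htop : ((t : ℂ) • 1 - X).PosSemidef :=
    cu_smul_one_sub_psd hX.1 fun i =>
      Finset.single_le_sum (f := fun i => hX.1.eigenvalues i)
        (fun j _ => hX.eigenvalues_nonneg j) (Finset.mem_univ i)
  set q : ℝ := Finset.univ.inf' (Finset.univ_nonempty (α := Fin n)) hQ.1.eigenvalues with hq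
  have hq0 : 0 < q := by
    rw [hq, Finset.lt_inf'_iff]
    exact fun i _ => hQ.eigenvalues_pos i
  have hbot : (Q - (q : ℂ) • 1).PosSemidef :=
    cu_sub_smul_one_psd hQ.1 fun i => Finset.inf'_le _ (Finset.mem_univ i)
  refine ⟨t / q, div_nonneg ht0 hq0.le, ?_⟩
  have key : ((t/q : ℝ) : ℂ) • Q - X = ((t/q : ℝ) : ℂ) • (Q - (q:ℂ) • 1) + ((t:ℂ) • 1 - X) := by
    rw [smul_sub, smul_smul, show ((t/q : ℝ):ℂ) * (q:ℂ) = (t:ℂ) by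
      push_cast; field_simp]
    abel
  rw [key]
  exact (cu_smul_psd (div_nonneg ht0 hq0.le) hbot).add htop
/-- The one-step operator `X ↦ Fᴴ X F + Re tr(Bᴴ X B Σ̄) • KᴴK`. -/
noncomputable def cuT {S N : ℕ} (B : Matrix (Fin S) (Fin N) ℂ)
    (Sb : Matrix (Fin N) (Fin N) ℂ) (F : Matrix (Fin S) (Fin S) ℂ)
    (K : Matrix (Fin N) (Fin S) ℂ) (X : Matrix (Fin S) (Fin S) ℂ) :
    Matrix (Fin S) (Fin S) ℂ :=
  Fᴴ * X * F + (((Bᴴ * X * B * Sb).trace.re : ℝ) : ℂ) • (Kᴴ * K)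

variable {S N : ℕ} {B : Matrix (Fin S) (Fin N) ℂ} {Sb : Matrix (Fin N) (Fin N) ℂ}
  {F : Matrix (Fin S) (Fin S) ℂ} {K : Matrix (Fin N) (Fin S) ℂ}

private lemma cuT_add (X Y : Matrix (Fin S) (Fin S) ℂ) :
    cuT B Sb F K (X + Y) = cuT B Sb F K X + cuT B Sb F K Y := by
  unfold cuT
  rw [Matrix.mul_add, Matrix.add_mul, Matrix.mul_add, Matrix.add_mul, Matrix.add_mul,
    Matrix.trace_add, Complex.add_re, Complex.ofReal_add, add_smul]
  abel

private lemma cuT_sub (X Y : Matrix (Fin S) (Fin S) ℂ) :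
    cuT B Sb F K (X - Y) = cuT B Sb F K X - cuT B Sb F K Y := by
  unfold cuT
  rw [Matrix.mul_sub, Matrix.sub_mul, Matrix.mul_sub, Matrix.sub_mul, Matrix.sub_mul,
    Matrix.trace_sub, Complex.sub_re, Complex.ofReal_sub, sub_smul]
  abel

private lemma cuT_zero : cuT B Sb F K 0 = 0 := by
  unfold cuT; simp

private lemma cuT_smul (c : ℝ) (X : Matrix (Fin S) (Fin S) ℂ) :
    cuT B Sb F K ((c : ℂ) • X) = (c : ℂ) • cuT B Sb F K X := by
  unfold cuT
  rw [Matrix.mul_smul, Matrix.smul_mul, Matrix.mul_smul, Matrix.smul_mul, Matrix.smul_mul,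
    Matrix.trace_smul, smul_add, smul_smul]
  congr 2
  rw [smul_eq_mul, Complex.re_ofReal_mul, Complex.ofReal_mul]

private lemma cuT_psd (hSb : Sb.PosSemidef) {X : Matrix (Fin S) (Fin S) ℂ}
    (hX : X.PosSemidef) : (cuT B Sb F K X).PosSemidef := by
  unfold cuT
  refine (hX.conjTranspose_mul_mul_same F).add (cu_smul_psd ?_ (posSemidef_conjTranspose_mul_self K))
  exact cu_trace_mul_nonneg (hX.conjTranspose_mul_mul_same B) hSb

private lemma cuT_sum (s : Finset ℕ) (f : ℕ → Matrix (Fin S) (Fin S) ℂ) :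
    cuT B Sb F K (∑ k ∈ s, f k) = ∑ k ∈ s, cuT B Sb F K (f k) := by
  classical
  induction s using Finset.induction with
  | empty => simp [cuT_zero]
  | insert a s h ih => rw [Finset.sum_insert h, Finset.sum_insert h, cuT_add, ih]
private lemma cu_completion {S N : ℕ}
    (A Q X' : Matrix (Fin S) (Fin S) ℂ) (Bh : Matrix (Fin S) (Fin N) ℂ)
    (M Rc : Matrix (Fin N) (Fin N) ℂ) (K : Matrix (Fin N) (Fin S) ℂ)
    (hX' : X'ᴴ = X') (hMH : Mᴴ = M)
    (hMl : M * M⁻¹ = 1) (hMr : M⁻¹ * M = 1)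
    (hMdef : M = Bhᴴ * X' * Bh + Rc) :
    Q + (A + Bh * K)ᴴ * X' * (A + Bh * K) + Kᴴ * Rc * K =
      (Q + Aᴴ * X' * A - Aᴴ * X' * Bh * M⁻¹ * Bhᴴ * X' * A) +
        (K + M⁻¹ * Bhᴴ * X' * A)ᴴ * M * (K + M⁻¹ * Bhᴴ * X' * A) := by
  have hRc : Rc = M - Bhᴴ * X' * Bh := by rw [hMdef]; abel
  subst hRc
  have hMiH : (M⁻¹)ᴴ = M⁻¹ := by rw [conjTranspose_nonsing_inv, hMH]
  have c1 : ∀ Z : Matrix (Fin N) (Fin S) ℂ, M * (M⁻¹ * Z) = Z := fun Z => by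
    rw [← Matrix.mul_assoc, hMl, Matrix.one_mul]
  have c2 : ∀ Z : Matrix (Fin N) (Fin S) ℂ, M⁻¹ * (M * Z) = Z := fun Z => by
    rw [← Matrix.mul_assoc, hMr, Matrix.one_mul]
  simp only [conjTranspose_add, conjTranspose_mul, conjTranspose_conjTranspose, hX', hMiH,
    Matrix.mul_add, Matrix.add_mul, Matrix.mul_sub, Matrix.sub_mul, Matrix.mul_assoc, c1, c2]
  abel

section CAREfacts

variable {L S N : ℕ} (σ : Fin L → Fin L)
  (A : Matrix (Fin S) (Fin S) ℂ) (B : Matrix (Fin S) (Fin N) ℂ)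
  (H : Fin L → Matrix (Fin N) (Fin N) ℂ)
  (Q : Matrix (Fin S) (Fin S) ℂ)
  (R Sb : Matrix (Fin N) (Fin N) ℂ)
  (X : Fin L → Matrix (Fin S) (Fin S) ℂ)

private lemma cu_careM_posDef (hR : R.PosDef) (hSb : Sb.PosSemidef)
    (hXpsd : ∀ ℓ, (X ℓ).PosSemidef) (ℓ : Fin L) :
    (careM σ B H R Sb X ℓ).PosDef := by
  have h1 : ((H ℓ)ᴴ * Bᴴ * X (σ ℓ) * B * H ℓ).PosSemidef := by
    have := (hXpsd (σ ℓ)).conjTranspose_mul_mul_same (B * H ℓ)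
    simpa only [conjTranspose_mul, Matrix.mul_assoc] using this
  have hc : 0 ≤ (Bᴴ * X (σ ℓ) * B * Sb).trace.re :=
    cu_trace_mul_nonneg ((hXpsd (σ ℓ)).conjTranspose_mul_mul_same B) hSb
  exact (Matrix.PosDef.posSemidef_add h1 hR).add_posSemidef
    (cu_smul_psd hc Matrix.PosSemidef.one)

private lemma cu_bellman (hR : R.PosDef) (hSb : Sb.PosSemidef)
    (hXpsd : ∀ ℓ, (X ℓ).PosSemidef)
    (hXcare : SatisfiesCARE σ A B H Q R Sb X) (ℓ : Fin L)
    (K : Matrix (Fin N) (Fin S) ℂ) :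
    Q + (A + B * H ℓ * K)ᴴ * X (σ ℓ) * (A + B * H ℓ * K) + Kᴴ * R * K +
        (((Bᴴ * X (σ ℓ) * B * Sb).trace.re : ℝ) : ℂ) • (Kᴴ * K) =
      X ℓ + (K + (careM σ B H R Sb X ℓ)⁻¹ * (B * H ℓ)ᴴ * X (σ ℓ) * A)ᴴ *
        (careM σ B H R Sb X ℓ) *
        (K + (careM σ B H R Sb X ℓ)⁻¹ * (B * H ℓ)ᴴ * X (σ ℓ) * A) := by
  set M := careM σ B H R Sb X ℓ with hM
  have hMpd : M.PosDef := cu_careM_posDef σ B H R Sb X hR hSb hXpsd ℓ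
  have hdet : IsUnit M.det := (Matrix.isUnit_iff_isUnit_det M).mp hMpd.isUnit
  have hMl : M * M⁻¹ = 1 := Matrix.mul_nonsing_inv M hdet
  have hMr : M⁻¹ * M = 1 := Matrix.nonsing_inv_mul M hdet
  have hMdef : M = (B * H ℓ)ᴴ * X (σ ℓ) * (B * H ℓ) +
      (R + (((Bᴴ * X (σ ℓ) * B * Sb).trace.re : ℝ) : ℂ) • 1) := by
    rw [hM]
    unfold careM
    simp only [conjTranspose_mul, Matrix.mul_assoc, add_assoc]
  have hkey := cu_completion A Q (X (σ ℓ)) (B * H ℓ) M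
    (R + (((Bᴴ * X (σ ℓ) * B * Sb).trace.re : ℝ) : ℂ) • 1) K
    (hXpsd (σ ℓ)).1 hMpd.isHermitian.eq hMl hMr hMdef
  have hcare : Q + Aᴴ * X (σ ℓ) * A - Aᴴ * X (σ ℓ) * (B * H ℓ) * M⁻¹ * (B * H ℓ)ᴴ * X (σ ℓ) * A
      = X ℓ := by
    rw [hXcare ℓ]
    simp only [conjTranspose_mul, Matrix.mul_assoc, hM]
  rw [hcare] at hkey
  have hRc : Kᴴ * (R + (((Bᴴ * X (σ ℓ) * B * Sb).trace.re : ℝ) : ℂ) • 1) * K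
      = Kᴴ * R * K + (((Bᴴ * X (σ ℓ) * B * Sb).trace.re : ℝ) : ℂ) • (Kᴴ * K) := by
    rw [Matrix.mul_add, Matrix.add_mul, Matrix.mul_smul, Matrix.mul_one, Matrix.smul_mul]
  rw [hRc] at hkey
  rw [← add_assoc] at hkey
  convert hkey using 3

end CAREfacts
private lemma cu_E1 {L S N : ℕ} (σ : Fin L → Fin L)
    (A : Matrix (Fin S) (Fin S) ℂ) (B : Matrix (Fin S) (Fin N) ℂ)
    (H : Fin L → Matrix (Fin N) (Fin N) ℂ) (Q : Matrix (Fin S) (Fin S) ℂ)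
    (R Sb : Matrix (Fin N) (Fin N) ℂ) (X : Fin L → Matrix (Fin S) (Fin S) ℂ)
    (hR : R.PosDef) (hSb : Sb.PosSemidef)
    (hXpsd : ∀ ℓ, (X ℓ).PosSemidef)
    (hXcare : SatisfiesCARE σ A B H Q R Sb X) (ℓ : Fin L) :
    X ℓ = Q + (A + B * H ℓ * careK σ A B H R Sb X ℓ)ᴴ * X (σ ℓ) *
        (A + B * H ℓ * careK σ A B H R Sb X ℓ) +
      (careK σ A B H R Sb X ℓ)ᴴ * R * careK σ A B H R Sb X ℓ +
      (((Bᴴ * X (σ ℓ) * B * Sb).trace.re : ℝ) : ℂ) •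
        ((careK σ A B H R Sb X ℓ)ᴴ * careK σ A B H R Sb X ℓ) := by
  have h := cu_bellman σ A B H Q R Sb X hR hSb hXpsd hXcare ℓ (careK σ A B H R Sb X ℓ)
  have hz : careK σ A B H R Sb X ℓ +
      (careM σ B H R Sb X ℓ)⁻¹ * (B * H ℓ)ᴴ * X (σ ℓ) * A = 0 := by
    unfold careK
    simp only [conjTranspose_mul, Matrix.mul_assoc, Matrix.neg_mul]
    exact neg_add_cancel _
  rw [hz] at h
  simp only [conjTranspose_zero, Matrix.zero_mul, Matrix.mul_zero, add_zero] at h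
  exact h.symm
private lemma cu_psd_neg_psd {n : ℕ} {X : Matrix (Fin n) (Fin n) ℂ}
    (h1 : X.PosSemidef) (h2 : (-X).PosSemidef) : X = 0 := by
  classical
  have hev : ∀ i, h1.1.eigenvalues i = 0 := by
    intro i
    refine le_antisymm ?_ (h1.eigenvalues_nonneg i)
    rw [h1.1.eigenvalues_eq]
    have := h2.re_dotProduct_nonneg ⇑(h1.1.eigenvectorBasis i)
    rw [Matrix.neg_mulVec, dotProduct_neg] at this
    simp only [Complex.neg_re] at this
    simpa using this
  have hspec := h1.1.spectral_theorem
  rw [show (RCLike.ofReal ∘ h1.1.eigenvalues : Fin n → ℂ) = fun _ => 0 by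
    funext i; simp [hev i], diagonal_zero] at hspec
  simpa using hspec
/-- Iterates of the one-step operator along the mode map. -/
noncomputable def cuIter {L S N : ℕ} (σ : Fin L → Fin L) (B : Matrix (Fin S) (Fin N) ℂ)
    (Sb : Matrix (Fin N) (Fin N) ℂ) (F : Fin L → Matrix (Fin S) (Fin S) ℂ)
    (K : Fin L → Matrix (Fin N) (Fin S) ℂ) (X0 : Fin L → Matrix (Fin S) (Fin S) ℂ) :
    ℕ → Fin L → Matrix (Fin S) (Fin S) ℂ
  | 0 => X0
  | (k+1) => fun ℓ => cuT B Sb (F ℓ) (K ℓ) (cuIter σ B Sb F K X0 k (σ ℓ))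

private lemma care_diff_psd {L S N : ℕ} (σ : Fin L → Fin L)
    (A : Matrix (Fin S) (Fin S) ℂ) (B : Matrix (Fin S) (Fin N) ℂ)
    (H : Fin L → Matrix (Fin N) (Fin N) ℂ)
    (Q : Matrix (Fin S) (Fin S) ℂ) (hQ : Q.PosDef)
    (R : Matrix (Fin N) (Fin N) ℂ) (hR : R.PosDef)
    (Sb : Matrix (Fin N) (Fin N) ℂ) (hSb : Sb.PosSemidef)
    (P Sf : Fin L → Matrix (Fin S) (Fin S) ℂ)
    (hPpsd : ∀ ℓ, (P ℓ).PosSemidef) (hSpsd : ∀ ℓ, (Sf ℓ).PosSemidef)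
    (hPcare : SatisfiesCARE σ A B H Q R Sb P)
    (hScare : SatisfiesCARE σ A B H Q R Sb Sf)
    (hS : Nonempty (Fin S)) :
    ∀ ℓ, (P ℓ - Sf ℓ).PosSemidef := by
  classical
  set Kp : Fin L → Matrix (Fin N) (Fin S) ℂ := careK σ A B H R Sb P with hKp
  set Fp : Fin L → Matrix (Fin S) (Fin S) ℂ := fun ℓ => A + B * H ℓ * Kp ℓ with hFp
  have e1 : ∀ ℓ, P ℓ = Q + (Fp ℓ)ᴴ * P (σ ℓ) * Fp ℓ + (Kp ℓ)ᴴ * R * Kp ℓ +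
      (((Bᴴ * P (σ ℓ) * B * Sb).trace.re : ℝ) : ℂ) • ((Kp ℓ)ᴴ * Kp ℓ) := fun ℓ =>
    cu_E1 σ A B H Q R Sb P hR hSb hPpsd hPcare ℓ
  have e2 : ∀ ℓ, (Q + (Fp ℓ)ᴴ * Sf (σ ℓ) * Fp ℓ + (Kp ℓ)ᴴ * R * Kp ℓ +
      (((Bᴴ * Sf (σ ℓ) * B * Sb).trace.re : ℝ) : ℂ) • ((Kp ℓ)ᴴ * Kp ℓ) - Sf ℓ).PosSemidef := by
    intro ℓ
    have h := cu_bellman σ A B H Q R Sb Sf hR hSb hSpsd hScare ℓ (Kp ℓ)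
    rw [h, add_sub_cancel_left]
    exact (cu_careM_posDef σ B H R Sb Sf hR hSb hSpsd ℓ).posSemidef.conjTranspose_mul_mul_same _
  have hQstep : ∀ ℓ, (P ℓ - cuT B Sb (Fp ℓ) (Kp ℓ) (P (σ ℓ)) - Q).PosSemidef := by
    intro ℓ
    have hrw : P ℓ - cuT B Sb (Fp ℓ) (Kp ℓ) (P (σ ℓ)) - Q = (Kp ℓ)ᴴ * R * Kp ℓ := by
      conv_lhs => rw [e1 ℓ]
      unfold cuT
      abel
    rw [hrw]
    exact hR.posSemidef.conjTranspose_mul_mul_same _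
  have hstep : ∀ ℓ, ((P ℓ - Sf ℓ) -
      cuT B Sb (Fp ℓ) (Kp ℓ) (P (σ ℓ) - Sf (σ ℓ))).PosSemidef := by
    intro ℓ
    have heq : (P ℓ - Sf ℓ) - cuT B Sb (Fp ℓ) (Kp ℓ) (P (σ ℓ) - Sf (σ ℓ))
        = Q + (Fp ℓ)ᴴ * Sf (σ ℓ) * Fp ℓ + (Kp ℓ)ᴴ * R * Kp ℓ +
          (((Bᴴ * Sf (σ ℓ) * B * Sb).trace.re : ℝ) : ℂ) • ((Kp ℓ)ᴴ * Kp ℓ) - Sf ℓ := by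
      conv_lhs => rw [e1 ℓ]
      unfold cuT
      rw [show Bᴴ * (P (σ ℓ) - Sf (σ ℓ)) * B * Sb
          = Bᴴ * P (σ ℓ) * B * Sb - Bᴴ * Sf (σ ℓ) * B * Sb by
        rw [Matrix.mul_sub, Matrix.sub_mul, Matrix.sub_mul]]
      rw [Matrix.trace_sub, Complex.sub_re, Complex.ofReal_sub, sub_smul]
      rw [Matrix.mul_sub, Matrix.sub_mul]
      abel
    rw [heq]
    exact e2 ℓ
  -- iterates of Q and of P
  have hWQpsd : ∀ k ℓ, (cuIter σ B Sb Fp Kp (fun _ => Q) k ℓ).PosSemidef := by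
    intro k
    induction k with
    | zero => intro ℓ; exact hQ.posSemidef
    | succ k ih => intro ℓ; exact cuT_psd hSb (ih (σ ℓ))
  have hWPpsd : ∀ k ℓ, (cuIter σ B Sb Fp Kp P k ℓ).PosSemidef := by
    intro k
    induction k with
    | zero => intro ℓ; exact hPpsd ℓ
    | succ k ih => intro ℓ; exact cuT_psd hSb (ih (σ ℓ))
  have htel : ∀ m ℓ, (P ℓ - (∑ k ∈ Finset.range m, cuIter σ B Sb Fp Kp (fun _ => Q) k ℓ)
      - cuIter σ B Sb Fp Kp P m ℓ).PosSemidef := by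
    intro m
    induction m with
    | zero =>
      intro ℓ
      have : P ℓ - (∑ k ∈ Finset.range 0, cuIter σ B Sb Fp Kp (fun _ => Q) k ℓ)
          - cuIter σ B Sb Fp Kp P 0 ℓ = 0 := by
        simp [cuIter]
      rw [this]
      exact Matrix.PosSemidef.zero
    | succ m ih =>
      intro ℓ
      have hrw : P ℓ - (∑ k ∈ Finset.range (m+1), cuIter σ B Sb Fp Kp (fun _ => Q) k ℓ)
          - cuIter σ B Sb Fp Kp P (m+1) ℓ
          = (P ℓ - cuT B Sb (Fp ℓ) (Kp ℓ) (P (σ ℓ)) - Q)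
            + cuT B Sb (Fp ℓ) (Kp ℓ)
              (P (σ ℓ) - (∑ k ∈ Finset.range m, cuIter σ B Sb Fp Kp (fun _ => Q) k (σ ℓ))
                - cuIter σ B Sb Fp Kp P m (σ ℓ)) := by
        rw [Finset.sum_range_succ']
        simp only [cuIter]
        rw [cuT_sub, cuT_sub, ← cuT_sum]
        abel
      rw [hrw]
      exact (hQstep ℓ).add (cuT_psd hSb (ih (σ ℓ)))
  -- a uniform scale bound
  obtain ⟨c0, hc00, hc0psd⟩ : ∃ c : ℝ, 0 ≤ c ∧ ∀ ℓ, ((c : ℂ) • Q - Sf ℓ).PosSemidef := by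
    have hex : ∀ ℓ : Fin L, ∃ c : ℝ, 0 ≤ c ∧ ((c : ℂ) • Q - Sf ℓ).PosSemidef := fun ℓ =>
      cu_exists_scale hS (hSpsd ℓ) hQ
    choose cf hcf0 hcfpsd using hex
    refine ⟨∑ ℓ', cf ℓ', Finset.sum_nonneg fun ℓ' _ => hcf0 ℓ', fun ℓ => ?_⟩
    have hle : cf ℓ ≤ ∑ ℓ', cf ℓ' :=
      Finset.single_le_sum (fun j _ => hcf0 j) (Finset.mem_univ ℓ)
    have hrw : ((∑ ℓ', cf ℓ' : ℝ) : ℂ) • Q - Sf ℓ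
        = (((∑ ℓ', cf ℓ') - cf ℓ : ℝ) : ℂ) • Q + ((cf ℓ : ℂ) • Q - Sf ℓ) := by
      rw [Complex.ofReal_sub, sub_smul]
      abel
    rw [hrw]
    exact (cu_smul_psd (by linarith) hQ.posSemidef).add (hcfpsd ℓ)
  have hc0 : (0:ℝ) < c0 + 1 := by linarith
  have hbase : ∀ ℓ, ((P ℓ - Sf ℓ) + ((c0 + 1 : ℝ) : ℂ) • Q).PosSemidef := by
    intro ℓ
    have hrw : (P ℓ - Sf ℓ) + ((c0 + 1 : ℝ) : ℂ) • Q
        = (P ℓ + ((c0 : ℂ) • Q - Sf ℓ)) + Q := by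
      rw [Complex.ofReal_add, Complex.ofReal_one, add_smul, one_smul]
      abel
    rw [hrw]
    exact ((hPpsd ℓ).add (hc0psd ℓ)).add hQ.posSemidef
  have hlow : ∀ k ℓ, (cuIter σ B Sb Fp Kp (fun ℓ' => P ℓ' - Sf ℓ') k ℓ
      + ((c0 + 1 : ℝ) : ℂ) • cuIter σ B Sb Fp Kp (fun _ => Q) k ℓ).PosSemidef := by
    intro k
    induction k with
    | zero => exact hbase
    | succ k ih =>
      intro ℓ
      have hrw : cuIter σ B Sb Fp Kp (fun ℓ' => P ℓ' - Sf ℓ') (k+1) ℓ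
          + ((c0 + 1 : ℝ) : ℂ) • cuIter σ B Sb Fp Kp (fun _ => Q) (k+1) ℓ
          = cuT B Sb (Fp ℓ) (Kp ℓ) (cuIter σ B Sb Fp Kp (fun ℓ' => P ℓ' - Sf ℓ') k (σ ℓ)
            + ((c0 + 1 : ℝ) : ℂ) • cuIter σ B Sb Fp Kp (fun _ => Q) k (σ ℓ)) := by
        simp only [cuIter]
        rw [cuT_add, cuT_smul]
      rw [hrw]
      exact cuT_psd hSb (ih (σ ℓ))
  have hdom : ∀ k ℓ, ((P ℓ - Sf ℓ)
      - cuIter σ B Sb Fp Kp (fun ℓ' => P ℓ' - Sf ℓ') k ℓ).PosSemidef := by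
    intro k
    induction k with
    | zero =>
      intro ℓ
      have : (P ℓ - Sf ℓ) - cuIter σ B Sb Fp Kp (fun ℓ' => P ℓ' - Sf ℓ') 0 ℓ = 0 := by
        simp [cuIter]
      rw [this]
      exact Matrix.PosSemidef.zero
    | succ k ih =>
      intro ℓ
      have hrw : (P ℓ - Sf ℓ) - cuIter σ B Sb Fp Kp (fun ℓ' => P ℓ' - Sf ℓ') (k+1) ℓ
          = ((P ℓ - Sf ℓ) - cuT B Sb (Fp ℓ) (Kp ℓ) (P (σ ℓ) - Sf (σ ℓ)))
            + cuT B Sb (Fp ℓ) (Kp ℓ) ((P (σ ℓ) - Sf (σ ℓ))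
              - cuIter σ B Sb Fp Kp (fun ℓ' => P ℓ' - Sf ℓ') k (σ ℓ)) := by
        simp only [cuIter]
        simp only [cuT_sub]
        abel
      rw [hrw]
      exact (hstep ℓ).add (cuT_psd hSb (ih (σ ℓ)))
  -- conclude positivity of the difference
  intro ℓ0
  refine Matrix.PosSemidef.of_dotProduct_mulVec_nonneg ((hPpsd ℓ0).1.sub (hSpsd ℓ0).1) ?_
  intro x
  have him : (star x ⬝ᵥ (P ℓ0 - Sf ℓ0) *ᵥ x).im = 0 :=
    cu_herm_qf_real ((hPpsd ℓ0).1.sub (hSpsd ℓ0).1) x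
  rw [Complex.nonneg_iff]
  refine ⟨?_, him.symm⟩
  -- real quadratic form
  set q : Matrix (Fin S) (Fin S) ℂ → ℝ := fun X => (star x ⬝ᵥ X *ᵥ x).re with hq
  have hqsub : ∀ X Y, q (X - Y) = q X - q Y := by
    intro X Y
    simp [hq, Matrix.sub_mulVec, dotProduct_sub, Complex.sub_re]
  have hqadd : ∀ X Y, q (X + Y) = q X + q Y := by
    intro X Y
    simp [hq, Matrix.add_mulVec, dotProduct_add, Complex.add_re]
  have hqsmul : ∀ (t : ℝ) X, q ((t : ℂ) • X) = t * q X := by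
    intro t X
    simp [hq, Matrix.smul_mulVec, dotProduct_smul, Complex.re_ofReal_mul]
  have hqpsd : ∀ {X : Matrix (Fin S) (Fin S) ℂ}, X.PosSemidef → 0 ≤ q X := fun hX =>
    hX.re_dotProduct_nonneg x
  have hqsum : ∀ (m : ℕ) (f : ℕ → Matrix (Fin S) (Fin S) ℂ),
      q (∑ k ∈ Finset.range m, f k) = ∑ k ∈ Finset.range m, q (f k) := by
    intro m f
    induction m with
    | zero => simp [hq]
    | succ m ih => rw [Finset.sum_range_succ, Finset.sum_range_succ, hqadd, ih]
  have hsum : ∀ m, (∑ k ∈ Finset.range m, q (cuIter σ B Sb Fp Kp (fun _ => Q) k ℓ0))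
      ≤ q (P ℓ0) := by
    intro m
    have h1 := hqpsd (htel m ℓ0)
    have h2 := hqpsd (hWPpsd m ℓ0)
    rw [hqsub, hqsub, hqsum] at h1
    linarith
  have hlb : ∀ k, -((c0 + 1) * q (cuIter σ B Sb Fp Kp (fun _ => Q) k ℓ0))
      ≤ q (P ℓ0 - Sf ℓ0) := by
    intro k
    have h1 := hqpsd (hdom k ℓ0)
    have h2 := hqpsd (hlow k ℓ0)
    rw [hqsub] at h1
    rw [hqadd, hqsmul] at h2
    linarith
  by_contra hneg
  push_neg at hneg
  have hr : 0 < -q (P ℓ0 - Sf ℓ0) := by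
    have : q (P ℓ0 - Sf ℓ0) = (star x ⬝ᵥ (P ℓ0 - Sf ℓ0) *ᵥ x).re := rfl
    linarith [this ▸ hneg]
  set δ : ℝ := (-q (P ℓ0 - Sf ℓ0)) / (c0 + 1) with hδ
  have hδ0 : 0 < δ := div_pos hr hc0
  have hterm : ∀ k, δ ≤ q (cuIter σ B Sb Fp Kp (fun _ => Q) k ℓ0) := by
    intro k
    have := hlb k
    rw [hδ, div_le_iff₀ hc0]
    nlinarith [hlb k]
  obtain ⟨m, hm⟩ := exists_nat_gt (q (P ℓ0) / δ)
  have hsum' := hsum m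
  have hcard : (m : ℝ) * δ ≤ ∑ k ∈ Finset.range m, q (cuIter σ B Sb Fp Kp (fun _ => Q) k ℓ0) := by
    calc (m : ℝ) * δ = ∑ _k ∈ Finset.range m, δ := by
          rw [Finset.sum_const, Finset.card_range, nsmul_eq_mul]
      _ ≤ _ := Finset.sum_le_sum fun k _ => hterm k
  have : q (P ℓ0) / δ < m := hm
  rw [div_lt_iff₀ hδ0] at this
  linarith

/-- Uniqueness part of Theorem 4: two positive semidefinite stabilizing
solutions of the CARE coincide. -/
theorem care_stabilizing_solution_unique {L S N : ℕ} (hL : 0 < L)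
    (σ : Fin L → Fin L)
    (A : Matrix (Fin S) (Fin S) ℂ) (B : Matrix (Fin S) (Fin N) ℂ)
    (H : Fin L → Matrix (Fin N) (Fin N) ℂ)
    (Q : Matrix (Fin S) (Fin S) ℂ) (hQ : Q.PosDef)
    (R : Matrix (Fin N) (Fin N) ℂ) (hR : R.PosDef)
    (Sb : Matrix (Fin N) (Fin N) ℂ) (hSb : Sb.PosSemidef)
    (P Sf : Fin L → Matrix (Fin S) (Fin S) ℂ)
    (hPpsd : ∀ ℓ, (P ℓ).PosSemidef) (hSpsd : ∀ ℓ, (Sf ℓ).PosSemidef)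
    (hPcare : SatisfiesCARE σ A B H Q R Sb P)
    (hScare : SatisfiesCARE σ A B H Q R Sb Sf)
    (hPstab : IsStabilizingCARE σ A B H R Sb P)
    (hSstab : IsStabilizingCARE σ A B H R Sb Sf) :
    ∀ ℓ, P ℓ = Sf ℓ := by
  intro ℓ
  rcases Nat.eq_zero_or_pos S with hS0 | hSpos
  · subst hS0
    ext i j
    exact i.elim0
  · have hSne : Nonempty (Fin S) := ⟨⟨0, hSpos⟩⟩
    have h1 := care_diff_psd σ A B H Q hQ R hR Sb hSb P Sf hPpsd hSpsd hPcare hScare hSne ℓ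
    have h2 := care_diff_psd σ A B H Q hQ R hR Sb hSb Sf P hSpsd hPpsd hScare hPcare hSne ℓ
    have h2' : (-(P ℓ - Sf ℓ)).PosSemidef := by rw [neg_sub]; exact h2
    exact sub_eq_zero.mp (cu_psd_neg_psd h1 h2')
end
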